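/- For every fixed integer L ≥ 1, t^{L²/2} · e^{−2tL} · D_L(t) tends to (2π)^{−L} · π^{L/2} · 2^{−L(L−1)/2} · Π_{q=0}^{L−1} q! as t → ∞. -/

import Mathlib

/-!
Substituting `θ = x / √t` turns `t ^ (L² / 2) e ^ (-2tL) D_L(t)` into `((2π) ^ L L!)⁻¹` times the
integral, over the cube `[-π√t, π√t] ^ L`, of `∏_{k<l} t |e^{i(x_k - x_l)/√t} - 1|²` times
`∏_j e ^ (-2t (1 - cos (x_j / √t)))`. This integrand tends to `∏_{k<l} (x_k - x_l)² e ^ (-∑ x_j²)`,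
and Jordan's inequality `sin u ≥ 2u/π` on `[0, π/2]` bounds it, uniformly in `t`, by the integrable
`∏_{k<l} (x_k - x_l)² e ^ (-(4/π²) ∑ x_j²)`; so dominated convergence applies. The limit is Mehta's
integral: writing the Vandermonde determinant with rescaled Hermite polynomials, which are
orthogonal for the Gaussian weight, and expanding its square over pairs of permutations
(Andréief's identity) leaves only the diagonal terms `∏_j j! √π`.
-/

open MeasureTheory Filter Real

/-- The `n×n` Toeplitz determinant with symbol `e^{2t cos θ}`, written as an
`n`-fold integral. -/
noncomputable def toeplitzD (n : ℕ) (t : ℝ) : ℝ :=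
  (1 / ((2 * Real.pi) ^ n * n.factorial)) *
    ∫ θ : Fin n → ℝ in Set.univ.pi fun _ => Set.Icc (-Real.pi) Real.pi,
      Real.exp (2 * t * ∑ j, Real.cos (θ j)) *
        ∏ k : Fin n, ∏ l ∈ Finset.Ioi k,
          ‖Complex.exp (θ k * Complex.I) - Complex.exp (θ l * Complex.I)‖ ^ 2

namespace Polynomial

/-- `Polynomial.hermite` are the probabilists' Hermite polynomials, orthogonal for this weight. -/
noncomputable def hermiteWeight (x : ℝ) : ℝ := Real.exp (-(x ^ 2 / 2))

theorem hasDerivAt_hermiteWeight (x : ℝ) : HasDerivAt hermiteWeight (-x * hermiteWeight x) x := by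
  unfold hermiteWeight
  simpa [mul_comm] using (((hasDerivAt_pow 2 x).div_const 2).neg).exp

theorem integrable_pow_mul_hermiteWeight (n : ℕ) :
    Integrable fun x : ℝ => x ^ n * hermiteWeight x := by
  refine (integrable_rpow_mul_exp_neg_mul_sq (b := 1 / 2) (by norm_num) (s := n)
    (neg_one_lt_zero.trans_le n.cast_nonneg)).congr (Eventually.of_forall fun x => ?_)
  simp only [Real.rpow_natCast, hermiteWeight]
  ring_nf

theorem integrable_aeval_mul_hermiteWeight (P : ℤ[X]) :
    Integrable fun x : ℝ => aeval x P * hermiteWeight x := by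
  simp only [aeval_eq_sum_range, Finset.sum_mul]
  exact integrable_finsetSum _ fun k _ => by
    simpa [zsmul_eq_mul, mul_assoc] using (integrable_pow_mul_hermiteWeight k).const_mul _

theorem integral_hermiteWeight : ∫ x, hermiteWeight x = √(2 * π) := by
  simpa [hermiteWeight, div_eq_inv_mul, ← neg_mul, show π / 2⁻¹ = 2 * π by ring]
    using integral_gaussian (1 / 2)

theorem hasDerivAt_aeval_hermite_mul_hermiteWeight (n : ℕ) (x : ℝ) :
    HasDerivAt (fun y => aeval y (hermite n) * hermiteWeight y)
      (-(aeval x (hermite (n + 1)) * hermiteWeight x)) x := by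
  refine ((Polynomial.hasDerivAt_aeval (hermite n) x).mul
    (hasDerivAt_hermiteWeight x)).congr_deriv ?_
  rw [hermite_succ, map_sub, map_mul, aeval_X]
  ring

/-- Gaussian integration by parts moves one step of the Hermite recursion onto `P`. -/
theorem integral_aeval_mul_hermite_succ (P : ℤ[X]) (n : ℕ) :
    ∫ x, aeval x P * (aeval x (hermite (n + 1)) * hermiteWeight x)
      = ∫ x, aeval x (derivative P) * (aeval x (hermite n) * hermiteWeight x) := by
  have hint (Q : ℤ[X]) (m : ℕ) :
      Integrable fun x : ℝ => aeval x Q * (aeval x (hermite m) * hermiteWeight x) := by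
    simpa [mul_assoc] using integrable_aeval_mul_hermiteWeight (Q * hermite m)
  rw [integral_mul_deriv_eq_deriv_mul_of_integrable (u := fun x => aeval x P)
      (v := fun x => -(aeval x (hermite n) * hermiteWeight x))
      (fun x _ => Polynomial.hasDerivAt_aeval P x)
      (fun x _ => by simpa using (hasDerivAt_aeval_hermite_mul_hermiteWeight n x).fun_neg)
      (hint P (n + 1)) (by simpa only [Pi.mul_def, mul_neg] using (hint (derivative P) n).fun_neg)
      (by simpa only [Pi.mul_def, mul_neg] using (hint P n).fun_neg), ← integral_neg]
  simp

theorem integral_aeval_mul_hermite (P : ℤ[X]) (n : ℕ) :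
    ∫ x, aeval x P * (aeval x (hermite n) * hermiteWeight x)
      = ∫ x, aeval x (derivative^[n] P) * hermiteWeight x := by
  induction n generalizing P with
  | zero => simp
  | succ n ih => rw [integral_aeval_mul_hermite_succ, ih, Function.iterate_succ_apply]

theorem iterate_derivative_hermite_self (n : ℕ) :
    derivative^[n] (hermite n) = C (n.factorial : ℤ) := by
  rw [eq_C_of_natDegree_le_zero (p := derivative^[n] (hermite n))
    (by simpa using natDegree_iterate_derivative (hermite n) n), coeff_iterate_derivative]
  simp [coeff_hermite_self, Nat.descFactorial_self]

theorem integral_hermite_mul_hermite_of_le {m n : ℕ} (hmn : m ≤ n) :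
    ∫ x, aeval x (hermite m) * (aeval x (hermite n) * hermiteWeight x)
      = if m = n then n.factorial * √(2 * π) else 0 := by
  rw [integral_aeval_mul_hermite]
  rcases hmn.eq_or_lt with rfl | hlt
  · simp [iterate_derivative_hermite_self, integral_const_mul, integral_hermiteWeight]
  · simp [iterate_derivative_eq_zero (p := hermite m) (by simpa using hlt), hlt.ne]

theorem integral_hermite_mul_hermite (m n : ℕ) :
    ∫ x, aeval x (hermite m) * aeval x (hermite n) * hermiteWeight x
      = if m = n then n.factorial * √(2 * π) else 0 := by
  simp_rw [mul_assoc]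
  rcases le_total m n with hmn | hnm
  · exact integral_hermite_mul_hermite_of_le hmn
  · simp_rw [← mul_assoc, mul_comm (aeval _ (hermite m)), mul_assoc,
      integral_hermite_mul_hermite_of_le hnm, eq_comm (a := n)]
    split_ifs with h <;> simp [h]

end Polynomial

section Andreief

open Equiv

variable {α ι : Type*} [Fintype ι] [DecidableEq ι]

theorem det_sq_mul_prod_eq_sum {R : Type*} [CommRing R] (f : ι → α → R) (w : α → R)
    (x : ι → α) :
    (Matrix.of fun i j => f j (x i)).det ^ 2 * ∏ i, w (x i)
      = ∑ σ : Perm ι, ∑ τ : Perm ι, ((Perm.sign σ * Perm.sign τ : ℤˣ) : R) *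
          ∏ i, f (σ i) (x i) * f (τ i) (x i) * w (x i) := by
  rw [← Matrix.det_transpose, Matrix.det_apply, sq, Finset.sum_mul_sum, Finset.sum_mul]
  refine Finset.sum_congr rfl fun σ _ => ?_
  rw [Finset.sum_mul]
  refine Finset.sum_congr rfl fun τ _ => ?_
  simp only [Units.smul_def, zsmul_eq_mul, Units.val_mul, Int.cast_mul, Matrix.transpose_apply,
    Matrix.of_apply, Finset.prod_mul_distrib]
  ring

variable [MeasurableSpace α] {μ : Measure α} [SigmaFinite μ]

theorem integrable_det_sq_mul_prod {f : ι → α → ℝ} {w : α → ℝ}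
    (hf : ∀ a b, Integrable (fun y => f a y * f b y * w y) μ) :
    Integrable (fun x : ι → α => (Matrix.of fun i j => f j (x i)).det ^ 2 * ∏ i, w (x i))
      (Measure.pi fun _ => μ) := by
  simp_rw [det_sq_mul_prod_eq_sum]
  exact integrable_finsetSum _ fun σ _ => integrable_finsetSum _ fun τ _ =>
    (Integrable.fintype_prod fun i => hf (σ i) (τ i)).const_mul _

/-- Andréief's identity for an orthogonal family. -/
theorem integral_det_sq_mul_prod {f : ι → α → ℝ} {w : α → ℝ} {c : ι → ℝ}
    (hf : ∀ a b, Integrable (fun y => f a y * f b y * w y) μ)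
    (horth : ∀ a b, ∫ y, f a y * f b y * w y ∂μ = if a = b then c a else 0) :
    ∫ x : ι → α, (Matrix.of fun i j => f j (x i)).det ^ 2 * ∏ i, w (x i)
        ∂(Measure.pi fun _ => μ) = (Fintype.card ι).factorial * ∏ j, c j := by
  simp_rw [det_sq_mul_prod_eq_sum]
  rw [integral_finsetSum _ fun σ _ => integrable_finsetSum _ fun τ _ =>
    (Integrable.fintype_prod fun i => hf (σ i) (τ i)).const_mul _]
  have hσ (σ : Perm ι) : ∫ x : ι → α, ∑ τ : Perm ι,
      ((Perm.sign σ * Perm.sign τ : ℤˣ) : ℝ) * ∏ i, f (σ i) (x i) * f (τ i) (x i) * w (x i)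
        ∂(Measure.pi fun _ => μ) = ∏ j, c j := by
    rw [integral_finsetSum _ fun τ _ =>
      (Integrable.fintype_prod fun i => hf (σ i) (τ i)).const_mul _]
    have hprod (τ : Perm ι) : ∫ x : ι → α, ∏ i, f (σ i) (x i) * f (τ i) (x i) * w (x i)
        ∂(Measure.pi fun _ => μ) = if σ = τ then ∏ j, c j else 0 := by
      rw [integral_fintype_prod_eq_prod (fun i y => f (σ i) y * f (τ i) y * w y)]
      simp_rw [horth, Finset.prod_ite_zero, Finset.mem_univ, true_implies, ← Perm.ext_iff,
        Equiv.prod_comp σ c]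
    simp only [integral_const_mul, hprod, mul_ite, mul_zero, Finset.sum_ite_eq, Finset.mem_univ,
      if_true, ← sq, Int.units_sq, Units.val_one, Int.cast_one, one_mul]
  rw [Finset.sum_congr rfl fun σ _ => hσ σ]
  simp [Fintype.card_perm]

end Andreief

section PairProducts

open Finset

theorem Fin.sum_card_Ioi (n : ℕ) : ∑ k : Fin n, #(Ioi k) = n.choose 2 := by
  simp_rw [Fin.card_Ioi]
  rw [Fin.sum_univ_eq_sum_range (fun i => n - 1 - i), sum_range_reflect (fun i => i) n,
    sum_range_id, Nat.choose_two_right]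

theorem Fin.prod_prod_Ioi_mul_const {M : Type*} [CommMonoid M] (n : ℕ) (a : M)
    (f : Fin n → Fin n → M) :
    ∏ k : Fin n, ∏ l ∈ Ioi k, a * f k l = a ^ n.choose 2 * ∏ k : Fin n, ∏ l ∈ Ioi k, f k l := by
  simp_rw [Finset.prod_mul_distrib, Finset.prod_const, Finset.prod_pow_eq_pow_sum,
    Fin.sum_card_Ioi]

end PairProducts

section Mehta

open Polynomial Finset

theorem det_aeval_hermite {n : ℕ} (v : Fin n → ℝ) :
    (Matrix.of fun i j : Fin n => aeval (v i) (hermite j)).det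
      = ∏ i, ∏ j ∈ Ioi i, (v j - v i) := by
  rw [← Matrix.det_vandermonde, Matrix.det_eval_matrixOfPolynomials_eq_det_vandermonde v
    (fun j => (hermite j).map (Int.castRingHom ℝ))
    (fun j => by rw [natDegree_map_eq_of_injective (RingHom.injective_int _), natDegree_hermite])
    (fun j => (hermite_monic j).map _)]
  simp [eval_map, aeval_def]

variable {c : ℝ}

theorem integrable_hermite_mul_hermite_gaussian (hc : 0 < c) (a b : ℕ) :
    Integrable fun y : ℝ =>
      aeval (√(2 * c) * y) (hermite a) * aeval (√(2 * c) * y) (hermite b) *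
        hermiteWeight (√(2 * c) * y) := by
  have hint :
      Integrable fun y : ℝ => aeval y (hermite a) * aeval y (hermite b) * hermiteWeight y := by
    simpa using integrable_aeval_mul_hermiteWeight (hermite a * hermite b)
  exact hint.comp_mul_left' (R := √(2 * c)) (by positivity)

theorem integral_hermite_mul_hermite_gaussian (hc : 0 < c) (a b : ℕ) :
    ∫ y : ℝ, aeval (√(2 * c) * y) (hermite a) * aeval (√(2 * c) * y) (hermite b) *
        hermiteWeight (√(2 * c) * y)
      = if a = b then b.factorial * √(π / c) else 0 := by
  rw [Measure.integral_comp_mul_left (fun y => aeval y (hermite a) * aeval y (hermite b) *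
    hermiteWeight y), integral_hermite_mul_hermite]
  split_ifs
  · rw [abs_of_pos (by positivity), smul_eq_mul, show π / c = 2 * π / (2 * c) by field_simp,
      Real.sqrt_div' _ (by positivity : 0 ≤ 2 * c)]
    ring
  · simp

theorem prod_sq_sub_mul_gaussian_eq (hc : 0 < c) {n : ℕ} (x : Fin n → ℝ) :
    (∏ k, ∏ l ∈ Ioi k, (x k - x l) ^ 2) * ∏ j, rexp (-(c * x j ^ 2))
      = ((2 * c) ^ n.choose 2)⁻¹ *
        ((Matrix.of fun i j : Fin n => aeval (√(2 * c) * x i) (hermite j)).det ^ 2 *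
          ∏ i, hermiteWeight (√(2 * c) * x i)) := by
  have hsq : √(2 * c) ^ 2 = 2 * c := Real.sq_sqrt (by positivity)
  have hweight (y : ℝ) : hermiteWeight (√(2 * c) * y) = rexp (-(c * y ^ 2)) := by
    rw [hermiteWeight, mul_pow, hsq]
    ring_nf
  have hpair (k l : Fin n) :
      (√(2 * c) * x l - √(2 * c) * x k) ^ 2 = 2 * c * (x k - x l) ^ 2 := by
    linear_combination (x k - x l) ^ 2 * hsq
  rw [det_aeval_hermite, ← prod_pow]
  simp_rw [← prod_pow, hpair, Fin.prod_prod_Ioi_mul_const, hweight]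
  rw [mul_assoc, inv_mul_cancel_left₀ (by positivity)]

theorem integrable_prod_sq_sub_mul_gaussian (hc : 0 < c) (n : ℕ) :
    Integrable fun x : Fin n → ℝ =>
      (∏ k, ∏ l ∈ Ioi k, (x k - x l) ^ 2) * ∏ j, rexp (-(c * x j ^ 2)) := by
  simp_rw [prod_sq_sub_mul_gaussian_eq hc]
  exact (integrable_det_sq_mul_prod (μ := volume)
    (f := fun (j : Fin n) y => aeval (√(2 * c) * y) (hermite j))
    fun a b => integrable_hermite_mul_hermite_gaussian hc a b).const_mul _

/-- Mehta's integral. -/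
theorem integral_prod_sq_sub_mul_gaussian (hc : 0 < c) (n : ℕ) :
    ∫ x : Fin n → ℝ, (∏ k, ∏ l ∈ Ioi k, (x k - x l) ^ 2) * ∏ j, rexp (-(c * x j ^ 2))
      = ((2 * c) ^ n.choose 2)⁻¹ *
        (n.factorial * ∏ j : Fin n, ((j : ℕ).factorial * √(π / c))) := by
  have horth (a b : Fin n) :
      ∫ y, aeval (√(2 * c) * y) (hermite a) * aeval (√(2 * c) * y) (hermite b) *
          hermiteWeight (√(2 * c) * y)
        = if a = b then (a : ℕ).factorial * √(π / c) else 0 := by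
    simp_rw [integral_hermite_mul_hermite_gaussian hc, Fin.val_inj]
    split_ifs with hab
    · rw [hab]
    · rfl
  have handreief := integral_det_sq_mul_prod (μ := volume)
    (f := fun (j : Fin n) y => aeval (√(2 * c) * y) (hermite j))
    (fun a b => integrable_hermite_mul_hermite_gaussian hc a b) horth
  rw [Fintype.card_fin] at handreief
  simp_rw [prod_sq_sub_mul_gaussian_eq hc]
  rw [integral_const_mul, ← handreief]
  rfl

end Mehta

theorem norm_cexp_mul_I_sub_cexp_mul_I_sq (a b : ℝ) :
    ‖Complex.exp (a * Complex.I) - Complex.exp (b * Complex.I)‖ ^ 2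
      = 4 * sin ((a - b) / 2) ^ 2 := by
  have hcos : cos (a - b) = 1 - 2 * sin ((a - b) / 2) ^ 2 := by
    rw [← cos_two_mul_eq_one_sub, mul_div_cancel₀ _ two_ne_zero]
  rw [Complex.sq_norm, Complex.normSq_apply, Complex.sub_re, Complex.sub_im,
    Complex.exp_ofReal_mul_I_re, Complex.exp_ofReal_mul_I_im, Complex.exp_ofReal_mul_I_re,
    Complex.exp_ofReal_mul_I_im]
  linear_combination sin_sq_add_cos_sq a + sin_sq_add_cos_sq b - 2 * hcos + 2 * cos_sub a b

theorem Real.sin_eq_mul_sinc (x : ℝ) : sin x = x * sinc x := by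
  rcases eq_or_ne x 0 with rfl | hx
  · simp
  · rw [sinc_of_ne_zero hx, mul_div_cancel₀ _ hx]

theorem Real.two_div_pi_le_sinc {x : ℝ} (hx : |x| ≤ π / 2) : 2 / π ≤ sinc x := by
  rcases eq_or_ne x 0 with rfl | hx0
  · rw [sinc_zero, div_le_one pi_pos]
    exact two_le_pi
  · have habs : sinc x = sinc |x| := by
      rcases abs_choice x with h | h <;> rw [h]
      exact (sinc_neg x).symm
    have hpos : 0 < |x| := abs_pos.2 hx0
    rw [habs, sinc_of_ne_zero hpos.ne', le_div_iff₀ hpos]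
    exact mul_le_sin (abs_nonneg x) hx

/-- `chordSq t d = t·|e^{id/√t} − 1|² = 4t·sin²(d/2√t)`, written through `sinc` so that it visibly
tends to `d²` as `t → ∞`. -/
noncomputable def chordSq (t d : ℝ) : ℝ := d ^ 2 * sinc (d / (2 * √t)) ^ 2

theorem four_mul_sin_sq_eq_chordSq {t : ℝ} (ht : 0 < t) (d : ℝ) :
    4 * t * sin (d / (2 * √t)) ^ 2 = chordSq t d := by
  have hs : √t ^ 2 = t := sq_sqrt ht.le
  have hs0 : √t ≠ 0 := (sqrt_pos.2 ht).ne'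
  rw [chordSq, sin_eq_mul_sinc]
  field_simp
  rw [hs]
  ring

theorem chordSq_nonneg (t d : ℝ) : 0 ≤ chordSq t d := by
  unfold chordSq; positivity

theorem chordSq_le_sq (t d : ℝ) : chordSq t d ≤ d ^ 2 :=
  mul_le_of_le_one_right (sq_nonneg d) <| by
    rw [← sq_abs]; exact pow_le_one₀ (abs_nonneg _) (abs_sinc_le_one _)

theorem mul_sq_le_chordSq {t d : ℝ} (hd : |d| ≤ π * √t) : 4 / π ^ 2 * d ^ 2 ≤ chordSq t d := by
  have hx : |d / (2 * √t)| ≤ π / 2 := by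
    rcases (sqrt_nonneg t).eq_or_lt with h | h
    · rw [← h, mul_zero, div_zero, abs_zero]; positivity
    · rw [abs_div, abs_of_pos (mul_pos two_pos h), div_le_iff₀ (mul_pos two_pos h)]
      linarith
  have := two_div_pi_le_sinc hx
  rw [chordSq, mul_comm]
  gcongr
  calc 4 / π ^ 2 = (2 / π) ^ 2 := by ring
    _ ≤ _ := by gcongr

theorem tendsto_chordSq (d : ℝ) : Tendsto (fun t => chordSq t d) atTop (nhds (d ^ 2)) := by
  have harg : Tendsto (fun t => d / (2 * √t)) atTop (nhds 0) :=
    tendsto_const_nhds.div_atTop ((tendsto_sqrt_atTop).const_mul_atTop two_pos)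
  simpa [chordSq] using
    tendsto_const_nhds.mul (((continuous_sinc.tendsto 0).comp harg).pow 2)

section Rescaling

open Finset Set

theorem setIntegral_pi_Icc_eq_setIntegral_comp_inv_smul {ι : Type*} [Fintype ι] {s : ℝ}
    (hs : 0 < s) (a : ℝ) (f : (ι → ℝ) → ℝ) :
    ∫ θ in univ.pi fun _ => Icc (-a) a, f θ
      = (s ^ Fintype.card ι)⁻¹ *
        ∫ x in univ.pi fun _ => Icc (-(a * s)) (a * s), f (s⁻¹ • x) := by
  rw [Measure.setIntegral_comp_smul_of_pos _ _ _ (inv_pos.2 hs), smul_set_univ_pi, smul_eq_mul]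
  simp only [Module.finrank_fintype_fun_eq_card, inv_pow, inv_inv, ← mul_assoc,
    inv_mul_cancel₀ (pow_pos hs _).ne', one_mul]
  congr
  ext
  have has : s⁻¹ * (a * s) = a := by field_simp
  simp only [Pi.smul_apply, LinearOrderedField.smul_Icc (inv_pos.2 hs), mul_neg, has]

theorem rpow_sq_div_two_mul_inv_sqrt_pow {t : ℝ} (ht : 0 < t) (n : ℕ) :
    t ^ ((n : ℝ) ^ 2 / 2) * (√t ^ n)⁻¹ = t ^ n.choose 2 := by
  rw [sqrt_eq_rpow, ← rpow_natCast (t ^ (1 / 2 : ℝ)), ← rpow_mul ht.le, ← rpow_neg ht.le,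
    ← rpow_add ht, ← rpow_natCast t (n.choose 2), Nat.cast_choose_two]
  ring_nf

theorem exp_neg_two_mul_mul_exp_sum_cos {t : ℝ} (ht : 0 < t) {n : ℕ} (x : Fin n → ℝ) :
    rexp (-2 * t * n) * rexp (2 * t * ∑ j, cos (x j / √t)) = ∏ j, rexp (-chordSq t (x j)) := by
  have hcos (u : ℝ) : -chordSq t u = -2 * t + 2 * t * cos (u / √t) := by
    rw [← four_mul_sin_sq_eq_chordSq ht, show u / √t = 2 * (u / (2 * √t)) by ring,
      cos_two_mul_eq_one_sub]
    ring
  rw [← exp_add, ← exp_sum, sum_congr rfl fun j _ => hcos (x j), sum_add_distrib, mul_sum]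
  simp only [sum_const, card_univ, Fintype.card_fin, nsmul_eq_mul]
  congr 2
  ring

theorem mul_norm_cexp_mul_I_sub_sq {t : ℝ} (ht : 0 < t) (a b : ℝ) :
    t * ‖Complex.exp (↑(a / √t) * Complex.I) - Complex.exp (↑(b / √t) * Complex.I)‖ ^ 2
      = chordSq t (a - b) := by
  rw [norm_cexp_mul_I_sub_cexp_mul_I_sq, ← four_mul_sin_sq_eq_chordSq ht, ← sub_div, div_div,
    mul_comm (√t)]
  ring

/-- The integrand of `toeplitzD n t` after the substitution `θ = x / √t`, multiplied by the
normalisation `t ^ (n² / 2) * e ^ (-2tn)`. -/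
noncomputable def rescaledToeplitzIntegrand (n : ℕ) (t : ℝ) : (Fin n → ℝ) → ℝ :=
  (univ.pi fun _ => Icc (-(π * √t)) (π * √t)).indicator fun x =>
    (∏ k, ∏ l ∈ Ioi k, chordSq t (x k - x l)) * ∏ j, rexp (-chordSq t (x j))

theorem normalized_toeplitzD_eq_integral {t : ℝ} (ht : 0 < t) (n : ℕ) :
    t ^ ((n : ℝ) ^ 2 / 2) * rexp (-2 * t * n) * toeplitzD n t
      = 1 / ((2 * π) ^ n * n.factorial) * ∫ x, rescaledToeplitzIntegrand n t x := by
  rw [toeplitzD, setIntegral_pi_Icc_eq_setIntegral_comp_inv_smul (sqrt_pos.2 ht),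
    Fintype.card_fin, rescaledToeplitzIntegrand,
    integral_indicator (MeasurableSet.univ_pi fun _ => measurableSet_Icc), mul_comm π,
    mul_left_comm, ← integral_const_mul, ← integral_const_mul]
  congr 1
  refine integral_congr_ae (Eventually.of_forall fun x => ?_)
  simp only [Pi.smul_apply, smul_eq_mul, inv_mul_eq_div]
  have hpairs : t ^ n.choose 2 * ∏ k, ∏ l ∈ Ioi k,
      ‖Complex.exp (↑(x k / √t) * Complex.I) - Complex.exp (↑(x l / √t) * Complex.I)‖ ^ 2
        = ∏ k, ∏ l ∈ Ioi k, chordSq t (x k - x l) := by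
    simp_rw [← Fin.prod_prod_Ioi_mul_const, mul_norm_cexp_mul_I_sub_sq ht]
  rw [← hpairs, ← exp_neg_two_mul_mul_exp_sum_cos ht, ← rpow_sq_div_two_mul_inv_sqrt_pow ht]
  ring

end Rescaling

section Limit

open Finset Set

theorem continuous_chordSq (t : ℝ) : Continuous (chordSq t) :=
  (continuous_pow 2).mul ((continuous_sinc.comp (continuous_id.div_const _)).pow 2)

theorem norm_rescaledToeplitzIntegrand_le (n : ℕ) (t : ℝ) (x : Fin n → ℝ) :
    ‖rescaledToeplitzIntegrand n t x‖
      ≤ (∏ k, ∏ l ∈ Ioi k, (x k - x l) ^ 2) * ∏ j, rexp (-(4 / π ^ 2 * x j ^ 2)) := by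
  rw [rescaledToeplitzIntegrand]
  by_cases hx : x ∈ univ.pi fun _ => Icc (-(π * √t)) (π * √t)
  · have hx' (j : Fin n) : |x j| ≤ π * √t := abs_le.2 (hx j (mem_univ j))
    have hpairs_nonneg : 0 ≤ ∏ k, ∏ l ∈ Ioi k, chordSq t (x k - x l) :=
      prod_nonneg fun k _ => prod_nonneg fun l _ => chordSq_nonneg t _
    rw [indicator_of_mem hx, norm_of_nonneg (mul_nonneg hpairs_nonneg (by positivity))]
    refine mul_le_mul (prod_le_prod (fun k _ => prod_nonneg fun l _ => chordSq_nonneg t _)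
      fun k _ => prod_le_prod (fun l _ => chordSq_nonneg t _) fun l _ => chordSq_le_sq t _)
      (prod_le_prod (fun j _ => (exp_pos _).le) fun j _ => ?_) (by positivity) ?_
    · exact exp_le_exp.2 (neg_le_neg (mul_sq_le_chordSq (hx' j)))
    · exact prod_nonneg fun k _ => prod_nonneg fun l _ => sq_nonneg _
  · rw [indicator_of_notMem hx, norm_zero]
    positivity

theorem tendsto_rescaledToeplitzIntegrand (n : ℕ) (x : Fin n → ℝ) :
    Tendsto (fun t => rescaledToeplitzIntegrand n t x) atTop
      (nhds ((∏ k, ∏ l ∈ Ioi k, (x k - x l) ^ 2) * ∏ j, rexp (-(x j ^ 2)))) := by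
  have hbox : ∀ᶠ t in atTop, x ∈ univ.pi fun _ => Icc (-(π * √t)) (π * √t) := by
    simp only [mem_univ_pi, Set.mem_Icc, ← abs_le, eventually_all]
    exact fun j => (tendsto_sqrt_atTop.const_mul_atTop pi_pos).eventually_ge_atTop _
  refine Tendsto.congr' (hbox.mono fun t ht => (indicator_of_mem ht _).symm) ?_
  exact (tendsto_finsetProd _ fun k _ => tendsto_finsetProd _ fun l _ =>
    tendsto_chordSq _).mul (tendsto_finsetProd _ fun j _ =>
      (continuous_exp.tendsto _).comp (tendsto_chordSq _).neg)

theorem tendsto_integral_rescaledToeplitzIntegrand (n : ℕ) :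
    Tendsto (fun t => ∫ x, rescaledToeplitzIntegrand n t x) atTop
      (nhds (∫ x : Fin n → ℝ, (∏ k, ∏ l ∈ Ioi k, (x k - x l) ^ 2) * ∏ j, rexp (-(x j ^ 2)))) := by
  refine tendsto_integral_filter_of_dominated_convergence _ (Eventually.of_forall fun t => ?_)
    (Eventually.of_forall fun t => Eventually.of_forall (norm_rescaledToeplitzIntegrand_le n t))
    (integrable_prod_sq_sub_mul_gaussian (by positivity) n)
    (Eventually.of_forall (tendsto_rescaledToeplitzIntegrand n))
  have hcont : Continuous fun x : Fin n → ℝ =>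
      (∏ k, ∏ l ∈ Ioi k, chordSq t (x k - x l)) * ∏ j, rexp (-chordSq t (x j)) := by
    have := continuous_chordSq t
    fun_prop
  exact (hcont.measurable.indicator
    (MeasurableSet.univ_pi fun _ => measurableSet_Icc)).aestronglyMeasurable

end Limit

theorem toeplitzD_selberg_limit (L : ℕ) :
    Tendsto (fun t : ℝ => t ^ ((L : ℝ) ^ 2 / 2) * Real.exp (-2 * t * L) * toeplitzD L t)
      atTop
      (nhds ((2 * Real.pi) ^ (-(L : ℝ)) * Real.pi ^ ((L : ℝ) / 2)
        * (2 : ℝ) ^ (-((L : ℝ) * ((L : ℝ) - 1)) / 2)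
        * ∏ q ∈ Finset.range L, (q.factorial : ℝ))) := by
  have hmehta := integral_prod_sq_sub_mul_gaussian one_pos L
  simp only [one_mul, mul_one, div_one] at hmehta
  have hlimit : 1 / ((2 * π) ^ L * L.factorial) * ((2 ^ L.choose 2)⁻¹ *
      (L.factorial * ∏ j : Fin L, ((j : ℕ).factorial * √π)))
      = (2 * π) ^ (-(L : ℝ)) * π ^ ((L : ℝ) / 2) * (2 : ℝ) ^ (-((L : ℝ) * ((L : ℝ) - 1)) / 2)
        * ∏ q ∈ Finset.range L, (q.factorial : ℝ) := by
    rw [rpow_neg (by positivity), rpow_natCast, rpow_div_two_eq_sqrt _ pi_pos.le, rpow_natCast,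
      neg_div, ← Nat.cast_choose_two, rpow_neg two_pos.le, rpow_natCast, Finset.prod_mul_distrib,
      Fin.prod_univ_eq_prod_range (fun q => (q.factorial : ℝ)), Finset.prod_const,
      Finset.card_univ, Fintype.card_fin]
    field_simp
  rw [← hlimit, ← hmehta]
  exact ((tendsto_integral_rescaledToeplitzIntegrand L).const_mul _).congr'
    ((eventually_gt_atTop 0).mono fun t ht => (normalized_toeplitzD_eq_integral ht L).symm)
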